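/- arXiv:1011.3284 — 5 statements merged into one kernel-verified Lean document; each statement's English description precedes it below -/
import Mathlib

section
/- Let q_a(u₁,…,u_r) be the Schur q-functions defined by ∏_{i=1}^r (1+u_i t)/(1-u_i t) = ∑_{a≥0} q_a(u) t^a. Then for all a ≥ 1, q_a ≡ 2·p_a(u) mod 4ℤ[u₁,…,u_r], where p_a denotes the a-th power sum symmetric polynomial p_a(u) = ∑_{i=1}^r u_i^a. -/
/-!
Writing `g_c = ∑ cⁿ tⁿ = 1 / (1 - c t)`, each factor satisfies `(1 + c t) / (1 - c t) = 2 g_c - 1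
= 1 + 2 (g_c - 1)` exactly. Modulo 4 a product of elements `1 + 2 f_i` is `1 + 2 ∑ f_i`, so
`∑ q_a tᵃ ≡ 1 + 2 ∑_i (g_{u_i} - 1)`, whose coefficient of `tᵃ` for `a ≥ 1` is `2 p_a(u)`.
-/

open PowerSeries

theorem prod_one_add_two_mul_of_four_eq_zero {A ι : Type*} [CommRing A] (h4 : (4 : A) = 0)
    (s : Finset ι) (f : ι → A) : ∏ i ∈ s, (1 + 2 * f i) = 1 + 2 * ∑ i ∈ s, f i := by
  classical
  induction s using Finset.induction_on with
  | empty => simp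
  | insert j s hj ih =>
    rw [Finset.prod_insert hj, Finset.sum_insert hj, ih]
    linear_combination (f j * ∑ i ∈ s, f i) * h4

namespace PowerSeries

variable {A : Type*} [CommRing A]

theorem mk_pow_mul_one_sub_C_mul_X (c : A) : (mk fun n => c ^ n) * (1 - C c * X) = 1 := by
  simpa [rescale_mk, rescale_X] using congrArg (rescale c) (mk_one_mul_one_sub_eq_one A)

theorem one_add_C_mul_X_eq (c : A) :
    1 + C c * X = (1 + 2 * ((mk fun n => c ^ n) - 1)) * (1 - C c * X) := by
  linear_combination (-2 : A⟦X⟧) * mk_pow_mul_one_sub_C_mul_X c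

theorem coeff_eq_two_mul_sum_pow_of_four_eq_zero (h4 : (4 : A) = 0) {ι : Type*} [Fintype ι]
    (u : ι → A) (Q : A⟦X⟧) (hQ : Q * ∏ i, (1 - C (u i) * X) = ∏ i, (1 + C (u i) * X))
    {a : ℕ} (ha : a ≠ 0) : coeff a Q = 2 * ∑ i, u i ^ a := by
  have h4' : (4 : A⟦X⟧) = 0 := by rw [← map_ofNat C 4, h4, map_zero]
  have hunit : IsUnit (∏ i, (1 - C (u i) * X)) := by simp [isUnit_iff_constantCoeff]
  have hQ' : Q = 1 + 2 * ∑ i, ((mk fun n => u i ^ n) - 1) := by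
    refine hunit.mul_right_cancel (hQ.trans ?_)
    simp_rw [one_add_C_mul_X_eq (u _), Finset.prod_mul_distrib,
      prod_one_add_two_mul_of_four_eq_zero h4']
  rw [hQ', map_add, ← map_ofNat C 2, coeff_C_mul, map_sum]
  simp only [map_sub, coeff_mk, coeff_one, if_neg ha, sub_zero, zero_add]

end PowerSeries

theorem sub_two_mul_sum_pow_mem_span_four {R ι : Type*} [CommRing R] [Fintype ι] (u : ι → R)
    (q : ℕ → R) (hq : mk q * ∏ i, (1 - C (u i) * X) = ∏ i, (1 + C (u i) * X))
    {a : ℕ} (ha : a ≠ 0) : q a - 2 * ∑ i, u i ^ a ∈ Ideal.span {(4 : R)} := by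
  set π := Ideal.Quotient.mk (Ideal.span {(4 : R)})
  have h4 : (4 : R ⧸ Ideal.span {(4 : R)}) = 0 := by
    rw [← map_ofNat π 4, Ideal.Quotient.eq_zero_iff_mem]
    exact Ideal.mem_span_singleton_self 4
  have hq' := congrArg (map π) hq
  simp only [map_mul, map_prod, map_sub, map_add, map_one, map_C, map_X] at hq'
  have hcoeff := coeff_eq_two_mul_sum_pow_of_four_eq_zero h4 (π ∘ u) _ hq' ha
  rw [← Ideal.Quotient.eq_zero_iff_mem, map_sub, map_mul, map_ofNat, map_sum, sub_eq_zero]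
  simpa only [coeff_map, coeff_mk, Function.comp_apply, map_pow] using hcoeff

/-- For a ≥ 1, the Schur q-function q_a is congruent to 2·p_a modulo 4ℤ[u₁,…,u_r],
where p_a is the a-th power sum. -/
theorem stmt1 (r : ℕ) (q : ℕ → MvPolynomial (Fin r) ℤ)
    (hq : (PowerSeries.mk fun a => q a) *
        ∏ i : Fin r, (1 - PowerSeries.C (R := MvPolynomial (Fin r) ℤ) (MvPolynomial.X i) * PowerSeries.X)
      = ∏ i : Fin r, (1 + PowerSeries.C (R := MvPolynomial (Fin r) ℤ) (MvPolynomial.X i) * PowerSeries.X)) :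
    ∀ a : ℕ, 1 ≤ a →
      ∃ h : MvPolynomial (Fin r) ℤ,
        q a - 2 * (∑ i : Fin r, MvPolynomial.X i ^ a) = 4 * h := by
  intro a ha
  obtain ⟨h, hh⟩ := Ideal.mem_span_singleton'.mp
    (sub_two_mul_sum_pow_mem_span_four MvPolynomial.X q hq (Nat.one_le_iff_ne_zero.mp ha))
  exact ⟨h, by rw [← hh, mul_comm]⟩
end

section
/- With q_a the Schur q-functions in variables u₁,…,u_r, define η_a⁺(u) = q_{a+1}(u) + ((-1)^{r-1}/2)·q_a(u) + (1/2)·δ_{a,0} for a ≥ 0, a priori an element of ℤ[1/2][u₁,…,u_r]. Then η_a⁺(u) has integer coefficients, i.e. η_a⁺(u) ∈ ℤ[u₁,…,u_r]. -/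
/-!
Over any commutative ring, `∏ (1 - uᵢ t)` has constant term `1`, hence is invertible, so the
series `Q = ∏ (1 + uᵢ t) / ∏ (1 - uᵢ t)` of the `q_a` has integer coefficients. Since
`1 + uᵢ t ≡ 1 - uᵢ t` modulo `2`, also `Q ≡ 1` modulo `2`: `q_0 = 1` and `q_a = 2 p_a` with `p_a`
integral for `a ≥ 1`. Then `η_0 = q_1 + ((-1)^(r-1) + 1)/2` and `η_a = q_{a+1} + (-1)^(r-1) p_a`.
-/

open PowerSeries

section

variable {R : Type*} [CommRing R] {ι : Type*}

theorem two_dvd_prod_one_add_sub_prod_one_sub (s : Finset ι) (y : ι → R) :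
    2 ∣ ∏ i ∈ s, (1 + y i) - ∏ i ∈ s, (1 - y i) := by
  rw [← Ideal.mem_span_singleton, ← Ideal.Quotient.eq, map_prod, map_prod]
  exact Finset.prod_congr rfl fun i _ =>
    Ideal.Quotient.eq.2 (Ideal.mem_span_singleton.2 ⟨y i, by ring⟩)

theorem PowerSeries.isUnit_prod_one_sub_C_mul_X (s : Finset ι) (x : ι → R) :
    IsUnit (∏ i ∈ s, (1 - C (x i) * X : R⟦X⟧)) := by
  simp [isUnit_iff_constantCoeff]

theorem PowerSeries.exists_eq_one_add_two_mul_of_mul_prod_one_sub_eq (s : Finset ι) (x : ι → R)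
    {Q : R⟦X⟧} (h : Q * ∏ i ∈ s, (1 - C (x i) * X) = ∏ i ∈ s, (1 + C (x i) * X)) :
    ∃ P, Q = 1 + 2 * P := by
  have hA := isUnit_prod_one_sub_C_mul_X s x
  obtain ⟨D, hD⟩ := two_dvd_prod_one_add_sub_prod_one_sub s fun i => C (x i) * X
  refine ⟨D * ↑hA.unit⁻¹, hA.mul_right_cancel ?_⟩
  rw [add_mul, mul_assoc, mul_assoc, hA.val_inv_mul, h]
  linear_combination hD

end

theorem PowerSeries.exists_eq_map_of_mul_map_eq {R S : Type*} [CommSemiring R] [CommSemiring S]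
    (f : R →+* S) {A B : R⟦X⟧} (hA : IsUnit A) {q : S⟦X⟧} (h : q * map f A = map f B) :
    ∃ Q, q = map f Q ∧ Q * A = B := by
  refine ⟨B * ↑hA.unit⁻¹, (hA.map (map f)).mul_right_cancel ?_, ?_⟩
  · rw [h, ← map_mul, mul_assoc, hA.val_inv_mul, mul_one]
  · rw [mul_assoc, hA.val_inv_mul, mul_one]

theorem exists_intCast_eq_neg_one_pow_add_one_div_two (n : ℕ) :
    ∃ m : ℤ, ((-1 : ℚ) ^ n + 1) / 2 = m := by
  rcases n.even_or_odd with h | h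
  · exact ⟨1, by rw [h.neg_one_pow]; norm_num⟩
  · exact ⟨0, by rw [h.neg_one_pow]; norm_num⟩

/-- η_a⁺(u) = q_{a+1}(u) + ((-1)^{r-1}/2)·q_a(u) + (1/2)·δ_{a,0}, a priori in ℚ[u₁,…,u_r],
actually has integer coefficients. -/
theorem stmt2 (r : ℕ) (q : ℕ → MvPolynomial (Fin r) ℚ)
    (hq : (PowerSeries.mk fun a => q a) *
        ∏ i : Fin r, (1 - PowerSeries.C (MvPolynomial.X i : MvPolynomial (Fin r) ℚ) * PowerSeries.X)
      = ∏ i : Fin r, (1 + PowerSeries.C (MvPolynomial.X i : MvPolynomial (Fin r) ℚ) * PowerSeries.X))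
    (η : ℕ → MvPolynomial (Fin r) ℚ)
    (hη : ∀ a : ℕ, η a = q (a + 1) + MvPolynomial.C ((-1 : ℚ) ^ (r - 1) / 2) * q a
      + MvPolynomial.C (if a = 0 then (1 / 2 : ℚ) else 0)) :
    ∀ a : ℕ, ∃ P : MvPolynomial (Fin r) ℤ,
      MvPolynomial.map (Int.castRingHom ℚ) P = η a := by
  set φ : MvPolynomial (Fin r) ℤ →+* MvPolynomial (Fin r) ℚ := MvPolynomial.map (Int.castRingHom ℚ)
  obtain ⟨Q, hqQ, hQ⟩ := exists_eq_map_of_mul_map_eq φ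
    (isUnit_prod_one_sub_C_mul_X Finset.univ MvPolynomial.X)
    (B := ∏ i, (1 + C (MvPolynomial.X i) * X)) (q := mk q) (by simpa [φ, map_prod] using hq)
  obtain ⟨P, hQP⟩ := exists_eq_one_add_two_mul_of_mul_prod_one_sub_eq _ _ hQ
  have hq_int (a : ℕ) : q a ∈ φ.range := ⟨coeff a Q, by simpa using (congrArg (coeff a) hqQ).symm⟩
  have hq_even (a : ℕ) : q (a + 1) = 2 * φ (coeff (a + 1) P) := by
    have := congrArg (coeff (a + 1)) hqQ
    rw [coeff_mk, hQP, two_mul, coeff_map, map_add, coeff_one, if_neg a.succ_ne_zero, zero_add,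
      map_add, map_add] at this
    rw [this, two_mul]
  have hq0 : q 0 = 1 := by simpa [map_prod] using congrArg constantCoeff hq
  intro a
  show η a ∈ φ.range
  rcases a with _ | a
  · obtain ⟨m, hm⟩ := exists_intCast_eq_neg_one_pow_add_one_div_two (r - 1)
    have : η 0 = q 1 + MvPolynomial.C (((-1 : ℚ) ^ (r - 1) + 1) / 2) := by
      rw [hη, hq0, mul_one, if_pos rfl, add_assoc, ← map_add, add_div]
    rw [this, hm]
    exact add_mem (hq_int 1) ⟨MvPolynomial.C m, by simp [φ]⟩
  · have : η (a + 1) = q (a + 2) + (-1) ^ (r - 1) * φ (coeff (a + 1) P) := by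
      rw [hη, if_neg a.succ_ne_zero, map_zero, add_zero, hq_even a, ← mul_assoc,
        ← map_ofNat MvPolynomial.C 2, ← map_mul, div_mul_cancel₀ _ two_ne_zero, map_pow, map_neg,
        map_one]
    rw [this]
    exact add_mem (hq_int _) (mul_mem (pow_mem (neg_mem (one_mem _)) _) ⟨_, rfl⟩)
end

section
/- Let S be a commutative ring of characteristic 2 and u₁,…,u_r ∈ S. Then the evaluation of the Schur q-function q_a at (u₁,…,u_r) is 0 for all a ≥ 1, while the evaluation of the integer polynomial (1/2)q_a (which lies in ℤ[u₁,…,u_r]) equals ∑_i u_i^a. -/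
/-!
Writing `(1 + u t)/(1 - u t) = 1 + 2 P_u` with `P_u = ∑_{a ≥ 1} u^a t^a`, the generating series of
the `q_a` is `∏ (1 + 2 P_{u_i}) ≡ 1 + 2 ∑ P_{u_i} (mod 4)`, so `q_a = 2 p_a + 4 e_a` for `a ≥ 1`.
Cancelling `2` in `ℤ[u₁,…,u_r]` gives `(1/2) q_a = p_a + 2 e_a`, and in characteristic `2` the
multiples of `2` vanish.
-/

theorem four_dvd_prod_one_add_two_mul_sub {R ι : Type*} [CommRing R] (s : Finset ι) (x : ι → R) :
    (4 : R) ∣ ∏ i ∈ s, (1 + 2 * x i) - (1 + 2 * ∑ i ∈ s, x i) := by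
  induction s using Finset.cons_induction with
  | empty => simp
  | cons j s hj ih =>
    obtain ⟨e, he⟩ := ih
    rw [Finset.prod_cons, Finset.sum_cons, sub_eq_iff_eq_add.mp he]
    exact ⟨x j * ∑ i ∈ s, x i + e + 2 * x j * e, by ring⟩

namespace PowerSeries

variable {R : Type*} [CommRing R]

theorem rescale_mk_one_mul_one_sub_C_mul_X (u : R) : rescale u (mk 1) * (1 - C u * X) = 1 := by
  simpa [rescale_X] using congrArg (rescale u) (mk_one_mul_one_sub_eq_one (S := R))

theorem one_add_C_mul_X_eq_s4 (u : R) :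
    1 + C u * X = (1 + 2 * (rescale u (mk 1) - 1)) * (1 - C u * X) := by
  linear_combination (-2 : R⟦X⟧) * rescale_mk_one_mul_one_sub_C_mul_X u

theorem coeff_rescale_mk_one_sub_one (u : R) {a : ℕ} (ha : a ≠ 0) :
    coeff a (rescale u (mk 1) - 1) = u ^ a := by
  simp [coeff_rescale, coeff_one, ha]

theorem four_dvd_coeff_sub_two_mul_sum_pow {ι : Type*} (s : Finset ι) (x : ι → R) (Q : R⟦X⟧)
    (hQ : Q * ∏ i ∈ s, (1 - C (x i) * X) = ∏ i ∈ s, (1 + C (x i) * X)) {a : ℕ} (ha : a ≠ 0) :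
    (4 : R) ∣ coeff a Q - 2 * ∑ i ∈ s, x i ^ a := by
  have hunit : IsUnit (∏ i ∈ s, (1 - C (x i) * X)) := by
    simp [isUnit_iff_constantCoeff]
  have hQ_prod : Q = ∏ i ∈ s, (1 + 2 * (rescale (x i) (mk 1) - 1)) := by
    refine hunit.mul_right_cancel ?_
    rw [hQ, ← Finset.prod_mul_distrib]
    exact Finset.prod_congr rfl fun i _ => one_add_C_mul_X_eq_s4 (x i)
  obtain ⟨E, hE⟩ := four_dvd_prod_one_add_two_mul_sub s fun i => rescale (x i) (mk 1) - 1
  refine ⟨coeff a E, ?_⟩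
  have := congrArg (coeff a) hE
  rw [← hQ_prod, ← map_ofNat (C (R := R)) 4, ← map_ofNat (C (R := R)) 2] at this
  rw [map_sub, map_add, coeff_C_mul, coeff_C_mul, coeff_one, if_neg ha, zero_add, map_sum] at this
  simpa only [coeff_rescale_mk_one_sub_one _ ha, map_ofNat] using this

end PowerSeries

/-- In a commutative ring S of characteristic 2: the evaluation of the Schur q-function
q_a at (u₁,…,u_r) is 0 for a ≥ 1, while the evaluation of the integer polynomial (1/2)q_a
equals ∑ᵢ uᵢᵃ. -/
theorem stmt4 (r : ℕ) (q : ℕ → MvPolynomial (Fin r) ℤ)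
    (hq : (PowerSeries.mk fun a => q a) *
        ∏ i : Fin r, (1 - PowerSeries.C (MvPolynomial.X i : MvPolynomial (Fin r) ℤ) * PowerSeries.X)
      = ∏ i : Fin r, (1 + PowerSeries.C (MvPolynomial.X i : MvPolynomial (Fin r) ℤ) * PowerSeries.X))
    (half : ℕ → MvPolynomial (Fin r) ℤ)
    (hhalf : ∀ a : ℕ, 1 ≤ a → 2 * half a = q a)
    (S : Type*) [CommRing S] [CharP S 2] (u : Fin r → S) :
    ∀ a : ℕ, 1 ≤ a →
      MvPolynomial.eval₂ (Int.castRingHom S) u (q a) = 0 ∧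
      MvPolynomial.eval₂ (Int.castRingHom S) u (half a) = ∑ i : Fin r, u i ^ a := by
  intro a ha
  obtain ⟨e, he⟩ :=
    PowerSeries.four_dvd_coeff_sub_two_mul_sum_pow _ _ _ hq (Nat.one_le_iff_ne_zero.mp ha)
  rw [PowerSeries.coeff_mk, ← hhalf a ha] at he
  have hhalf_eq : half a = ∑ i, MvPolynomial.X i ^ a + 2 * e :=
    mul_left_cancel₀ two_ne_zero (by linear_combination he)
  constructor
  · simp [← hhalf a ha, CharTwo.two_eq_zero]
  · simp [hhalf_eq, CharTwo.two_eq_zero]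
end

section
/- Let F be an algebraically closed field of characteristic 2. Suppose a sequence (ω_a)_{a≥0} in F satisfies a linear homogeneous recursion with constant coefficients eventually (i.e., there exist r > 0, N ≥ 0 and a₀,…,a_{r−1} ∈ F with ω_{r+ℓ} + ∑_{j=0}^{r−1} a_j ω_{j+ℓ} = 0 for all ℓ ≥ N), and also satisfies ω_{2a} = ω_a² for all a ≥ 0. Then there exist distinct u₁,…,u_d ∈ F such that ω_a = ∑_{i=1}^d u_i^a for all a ≥ 1, and ω₀ ∈ {0,1}. -/
open Polynomial Finset
open scoped PowerSeries

/-!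
The series `f = ∑ ω (n + 1) Xⁿ` satisfies `f' = f²`: in characteristic 2 the series `f²` only
has the even coefficients `ω (m + 1) ^ 2 = ω (2m + 2)`, and these are also those of `f'`.
The recursion makes `f = A / B` a rational function with `B(0) ≠ 0`. In lowest terms, `f' = f²`
reads `A'B - AB' = A²`, so `A ∣ A'`, hence `A' = 0` and `A = -B'`. Then `B` is separable and
`f = -B'/B = ∑_{B(w) = 0} 1/(w - X)`, whose `n`-th coefficient is `∑ w⁻¹ ^ (n + 1)`.
-/

namespace PowerSeries

variable {R : Type*} [CommRing R]

theorem map_frobenius_expand (p : ℕ) [ExpChar R p] (hp : p ≠ 0) (f : R⟦X⟧) :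
    (expand p hp f).map (frobenius R p) = f ^ p :=
  MvPowerSeries.map_frobenius_expand p hp

theorem derivative_mk_succ_eq_sq [CharP R 2] (ω : ℕ → R) (hsq : ∀ a, ω (2 * a) = ω a ^ 2) :
    d⁄dX R (mk fun n => ω (n + 1)) = (mk fun n => ω (n + 1)) ^ 2 := by
  rw [← map_frobenius_expand 2 two_ne_zero]
  ext n
  rw [coeff_derivative, coeff_map, coeff_expand, coeff_mk, frobenius_def]
  rcases Nat.even_or_odd' n with ⟨m, rfl | rfl⟩
  · rw [if_pos (dvd_mul_right 2 m), Nat.mul_div_cancel_left m two_pos, coeff_mk,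
      show 2 * m + 1 + 1 = 2 * (m + 1) by omega, hsq]
    simp [CharTwo.two_eq_zero]
  · rw [if_neg (Nat.not_two_dvd_bit1 m)]
    simp [CharTwo.two_eq_zero, one_add_one_eq_two]

theorem exists_coe_eq_of_coeff_eq_zero {f : R⟦X⟧} {n : ℕ}
    (hf : ∀ m, n ≤ m → coeff m f = 0) :
    ∃ P : R[X], (P : R⟦X⟧) = f :=
  ⟨trunc n f, by
    ext m
    rw [Polynomial.coeff_coe, coeff_trunc]
    split_ifs with hm
    · rfl
    · exact (hf m (not_lt.mp hm)).symm⟩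

theorem exists_coe_mul_mk_eq_of_eventual_recurrence (s : ℕ → R) {r N : ℕ} {a : ℕ → R}
    (hrec : ∀ ℓ, N ≤ ℓ → s (r + ℓ) + ∑ j ∈ range r, a j * s (j + ℓ) = 0) :
    ∃ P Q : R[X], Q.coeff 0 = 1 ∧ (Q : R⟦X⟧) * mk s = P := by
  -- the reciprocal of the characteristic polynomial `Xʳ + ∑ a j Xʲ`
  set Q : R[X] := 1 + ∑ j ∈ range r, Polynomial.C (a j) * Polynomial.X ^ (r - j)
  have hQ0 : Q.coeff 0 = 1 := by
    simp only [Q, coeff_add, coeff_one_zero, finsetSum_coeff, add_eq_left]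
    exact sum_eq_zero fun j hj => by
      rw [Polynomial.coeff_C_mul_X_pow, if_neg (by have := mem_range.mp hj; omega)]
  have hQ : (Q : R⟦X⟧) = 1 + ∑ j ∈ range r, C (a j) * X ^ (r - j) := by
    rw [← coeToPowerSeries.ringHom_apply, map_add, map_one, map_sum]
    simp only [map_mul, map_pow, coeToPowerSeries.ringHom_apply, Polynomial.coe_C,
      Polynomial.coe_X]
  have hvanish : ∀ m, r + N ≤ m → coeff m ((Q : R⟦X⟧) * mk s) = 0 := by
    intro m hm
    obtain ⟨ℓ, rfl⟩ := Nat.exists_eq_add_of_le hm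
    have hterm : ∀ j ∈ range r,
        coeff (r + N + ℓ) (C (a j) * X ^ (r - j) * mk s) = a j * s (j + (N + ℓ)) := by
      intro j hj
      have := mem_range.mp hj
      rw [mul_assoc, coeff_C_mul, coeff_X_pow_mul', if_pos (by omega), coeff_mk]
      congr 2
      omega
    rw [hQ, add_mul, one_mul, sum_mul, map_add, map_sum, sum_congr rfl hterm, coeff_mk, add_assoc]
    exact hrec (N + ℓ) (Nat.le_add_right N ℓ)
  obtain ⟨P, hP⟩ := exists_coe_eq_of_coeff_eq_zero hvanish
  exact ⟨P, Q, hQ0, hP.symm⟩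

end PowerSeries

namespace Polynomial

section CommRing

variable {R : Type*} [CommRing R]

theorem derivative_mul_sub_mul_derivative_eq_sq {A B : R[X]} {f : R⟦X⟧}
    (hf : d⁄dX R f = f ^ 2) (h : (B : R⟦X⟧) * f = A) :
    derivative A * B - A * derivative B = A ^ 2 := by
  apply Polynomial.coe_inj.mp
  have hA' : (derivative A : R⟦X⟧) = derivative B * f + B * f ^ 2 := by
    rw [← PowerSeries.derivative_coe, ← h, Derivation.leibniz, PowerSeries.derivative_coe, hf,
      smul_eq_mul, smul_eq_mul]
    ring
  push_cast
  rw [hA', ← h]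
  ring

theorem eq_neg_derivative_of_isCoprime [IsDomain R] {A B : R[X]} (hAB : IsCoprime A B)
    (h : derivative A * B - A * derivative B = A ^ 2) : A = -derivative B := by
  have hdvd : A ∣ derivative A :=
    hAB.dvd_of_dvd_mul_right ⟨A + derivative B, by linear_combination h⟩
  have hA' : derivative A = 0 := dvd_derivative_iff.mp hdvd
  rcases mul_eq_zero.mp (show A * (A + derivative B) = 0 by linear_combination -h + B * hA')
    with hA | hAB'
  · subst hA
    rw [derivative_of_natDegree_zero (natDegree_eq_zero_of_isUnit (isCoprime_zero_left.mp hAB)),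
      neg_zero]
  · exact eq_neg_of_add_eq_zero_left hAB'

end CommRing

variable {F : Type*} [Field F]

theorem exists_isCoprime_coe_mul_eq {f : F⟦X⟧} {P Q : F[X]} (hQ : Q.coeff 0 ≠ 0)
    (h : (Q : F⟦X⟧) * f = P) :
    ∃ A B : F[X], IsCoprime A B ∧ B.coeff 0 ≠ 0 ∧ (B : F⟦X⟧) * f = A := by
  classical
  have hQ0 : Q ≠ 0 := fun hQ0 => hQ (by rw [hQ0, coeff_zero])
  set G := GCDMonoid.gcd P Q
  have hG : G ≠ 0 := gcd_ne_zero_of_right hQ0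
  have hGA : G * (P / G) = P := EuclideanDomain.mul_div_cancel' hG (gcd_dvd_left P Q)
  have hGB : G * (Q / G) = Q := EuclideanDomain.mul_div_cancel' hG (gcd_dvd_right P Q)
  refine ⟨P / G, Q / G, isCoprime_div_gcd_div_gcd hQ0, ?_, ?_⟩
  · refine right_ne_zero_of_mul (?_ : G.coeff 0 * (Q / G).coeff 0 ≠ 0)
    rwa [← mul_coeff_zero, hGB]
  · refine mul_left_cancel₀ (coe_eq_zero_iff.not.mpr hG) ?_
    rw [← mul_assoc, ← coe_mul, hGB, h, ← coe_mul, hGA]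

theorem coe_X_sub_C_mul_mk_inv_pow {w : F} (hw : w ≠ 0) :
    ((X - C w : F[X]) : F⟦X⟧) * PowerSeries.mk (fun n => w⁻¹ ^ (n + 1)) = -1 := by
  have hmk :
      PowerSeries.mk (fun n => w⁻¹ ^ (n + 1)) = PowerSeries.invUnitsSub (Units.mk0 w hw) := by
    ext n
    simp [PowerSeries.coeff_invUnitsSub]
  rw [hmk, coe_sub, coe_X, coe_C, ← neg_sub, neg_mul, mul_comm]
  exact congrArg Neg.neg (PowerSeries.invUnitsSub_mul_sub (Units.mk0 w hw))

theorem coe_prod_X_sub_C_mul_sum_mk_inv_pow {T : Finset F} (hT : ∀ w ∈ T, w ≠ 0) :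
    ((∏ w ∈ T, (X - C w) : F[X]) : F⟦X⟧) *
        ∑ w ∈ T, PowerSeries.mk (fun n => w⁻¹ ^ (n + 1)) =
      ((-derivative (∏ w ∈ T, (X - C w)) : F[X]) : F⟦X⟧) := by
  classical
  rw [derivative_prod_finset, mul_sum]
  simp only [← coeToPowerSeries.ringHom_apply, map_neg, map_sum, ← sum_neg_distrib]
  refine sum_congr rfl fun w hw => ?_
  rw [← mul_prod_erase T _ hw, derivative_X_sub_C, mul_one, map_mul,
    mul_comm (coeToPowerSeries.ringHom _), mul_assoc]
  simp only [coeToPowerSeries.ringHom_apply]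
  rw [coe_X_sub_C_mul_mk_inv_pow (hT w hw), mul_neg_one]

theorem exists_finset_coeff_eq_sum_pow [IsAlgClosed F] {B : F[X]} (hsep : B.Separable)
    (hB0 : B.coeff 0 ≠ 0) {f : F⟦X⟧}
    (h : (B : F⟦X⟧) * f = ((-derivative B : F[X]) : F⟦X⟧)) :
    ∃ s : Finset F, ∀ n, PowerSeries.coeff n f = ∑ u ∈ s, u ^ (n + 1) := by
  classical
  set T := B.roots.toFinset
  have hBT : B = C B.leadingCoeff * ∏ w ∈ T, (X - C w) := by
    rw [prod_eq_multiset_prod, Multiset.toFinset_val, (nodup_roots hsep).dedup]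
    exact (IsAlgClosed.splits B).eq_prod_roots
  have hT : ∀ w ∈ T, w ≠ 0 := by
    rintro w hw rfl
    rw [coeff_zero_eq_eval_zero] at hB0
    exact hB0 (mem_roots'.mp (Multiset.mem_toFinset.mp hw)).2
  have hBS : (B : F⟦X⟧) * ∑ w ∈ T, PowerSeries.mk (fun n => w⁻¹ ^ (n + 1)) =
      ((-derivative B : F[X]) : F⟦X⟧) := by
    rw [hBT, derivative_C_mul, coe_mul, mul_assoc, coe_prod_X_sub_C_mul_sum_mk_inv_pow hT,
      ← coe_mul, mul_neg]
  have hB : (B : F⟦X⟧) ≠ 0 := coe_eq_zero_iff.not.mpr fun hB => hB0 (by rw [hB, coeff_zero])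
  refine ⟨T.image (·⁻¹), fun n => ?_⟩
  rw [mul_left_cancel₀ hB (h.trans hBS.symm), map_sum, sum_image inv_injective.injOn]
  simp only [PowerSeries.coeff_mk, inv_pow]

end Polynomial

theorem Finset.exists_injective_fin_sum_eq {α M : Type*} [AddCommMonoid M] (s : Finset α) :
    ∃ u : Fin #s → α, Function.Injective u ∧
      ∀ f : α → M, ∑ i, f (u i) = ∑ x ∈ s, f x :=
  ⟨fun i => s.equivFin.symm i, Subtype.val_injective.comp s.equivFin.symm.injective,
    fun f => by rw [← s.sum_coe_sort]; exact Equiv.sum_comp s.equivFin.symm (fun x => f x)⟩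

/-- (Buzzard's lemma) Over an algebraically closed field F of characteristic 2: if (ω_a)
satisfies an eventual linear homogeneous recursion and ω_{2a} = ω_a² for all a, then there
exist distinct u₁,…,u_d ∈ F with ω_a = ∑ᵢ uᵢᵃ for all a ≥ 1, and ω₀ ∈ {0,1}. -/
theorem stmt6 (F : Type*) [Field F] [IsAlgClosed F] [CharP F 2]
    (ω : ℕ → F)
    (hrec : ∃ (r : ℕ), 0 < r ∧ ∃ (N : ℕ) (a : ℕ → F),
      ∀ ℓ : ℕ, N ≤ ℓ → ω (r + ℓ) + ∑ j ∈ Finset.range r, a j * ω (j + ℓ) = 0)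
    (hsq : ∀ a : ℕ, ω (2 * a) = ω a ^ 2) :
    ∃ (d : ℕ) (u : Fin d → F), Function.Injective u ∧
      (∀ a : ℕ, 1 ≤ a → ω a = ∑ i : Fin d, u i ^ a) ∧
      (ω 0 = 0 ∨ ω 0 = 1) := by
  obtain ⟨r, -, N, a, hrec⟩ := hrec
  obtain ⟨P, Q, hQ, hQf⟩ := PowerSeries.exists_coe_mul_mk_eq_of_eventual_recurrence
    (fun n => ω (n + 1)) (N := N) fun ℓ hℓ => hrec (ℓ + 1) (by omega)
  obtain ⟨A, B, hAB, hB0, hBf⟩ := exists_isCoprime_coe_mul_eq (hQ ▸ one_ne_zero) hQf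
  have hA : A = -derivative B := eq_neg_derivative_of_isCoprime hAB
    (derivative_mul_sub_mul_derivative_eq_sq (PowerSeries.derivative_mk_succ_eq_sq ω hsq) hBf)
  have hsep : B.Separable :=
    (separable_def B).mpr ((IsCoprime.neg_left_iff _ _).mp (hA ▸ hAB)).symm
  obtain ⟨s, hs⟩ := exists_finset_coeff_eq_sum_pow hsep hB0 (hA ▸ hBf)
  obtain ⟨u, hu, hsum⟩ := s.exists_injective_fin_sum_eq (M := F)
  refine ⟨#s, u, hu, fun a ha => ?_, IsIdempotentElem.iff_eq_zero_or_one.mp ?_⟩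
  · obtain ⟨n, rfl⟩ := Nat.exists_eq_add_of_le' ha
    rw [hsum (· ^ (n + 1))]
    simpa using hs n
  · simpa [IsIdempotentElem, sq] using (hsq 0).symm
end

section
/- Let F be a field, let u₁,…,u_s, v₁,…,v_r ∈ F be nonzero with u_ℓ ≠ v_j^{−1} for all ℓ, j, let A₀ ∈ F, m ∈ ℤ, and suppose the identity 1 = A₀²·(−t)^{r−s}·(∏_ℓ u_ℓ / ∏_j v_j)·(∏_{ℓ=1}^s (t−u_ℓ^{−1})(t−u_ℓ)) / (∏_{j=1}^r (t−v_j^{−1})(t−v_j)) holds in F(t). Then r = s, A₀² = 1, and the multisets {u₁,…,u_s} and {v₁,…,v_r} coincide. -/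
/-!
Clearing denominators turns the identity into
`C (±∏ v) * X ^ s * P V = C (±A₀² ∏ u) * X ^ r * P U` in `F[X]`, where
`P S = ∏_{a ∈ S} (X - a⁻¹) (X - a)` is monic of degree `2 |S|`. Both sides are a constant times a
monic polynomial, so the constants agree and so do the monic parts; degrees then give `r = s`,
and cancelling `X ^ s` gives `P U = P V`. Comparing roots, `U⁻¹ + U = V⁻¹ + V`; since no `u`
is the inverse of a `v`, every `u` occurs in `V` at least as often as in `U`, and equal
cardinalities force `U = V`. The constants then give `A₀² = 1`.
-/

open Polynomial

theorem Multiset.eq_of_add_eq_add_of_disjoint {α : Type*} {A B S T : Multiset α}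
    (h : A + S = B + T) (hS : Disjoint S B) (hcard : card S = card T) : S = T := by
  classical
  refine Multiset.eq_of_le_of_card_le (Multiset.le_iff_count.mpr fun a => ?_) hcard.ge
  by_cases ha : a ∈ S
  · have := congrArg (Multiset.count a) h
    rw [count_add, count_add, count_eq_zero.mpr (Multiset.disjoint_left.mp hS ha)] at this
    omega
  · simp [count_eq_zero.mpr ha]

theorem Polynomial.Monic.eq_of_C_mul_eq_C_mul {R : Type*} [CommRing R] [IsDomain R] {p q : R[X]}
    (hp : p.Monic) (hq : q.Monic) {a b : R} (ha : a ≠ 0) (h : C a * p = C b * q) :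
    a = b ∧ p = q := by
  have hab : a = b := by
    simpa [hp.leadingCoeff, hq.leadingCoeff] using congrArg Polynomial.leadingCoeff h
  subst hab
  exact ⟨rfl, mul_left_cancel₀ (C_ne_zero.mpr ha) h⟩

namespace Polynomial
variable {F : Type*} [Field F]

noncomputable def reciprocalPairProd (S : Multiset F) : F[X] :=
  (S.map fun a => (X - C a⁻¹) * (X - C a)).prod

theorem monic_reciprocalPairProd (S : Multiset F) : (reciprocalPairProd S).Monic :=
  monic_multiset_prod_of_monic _ _ fun _ _ => (monic_X_sub_C _).mul (monic_X_sub_C _)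

theorem natDegree_reciprocalPairProd (S : Multiset F) :
    (reciprocalPairProd S).natDegree = 2 * Multiset.card S := by
  rw [reciprocalPairProd, natDegree_multiset_prod_of_monic _ fun f hf => ?_]
  · simp [natDegree_mul (X_sub_C_ne_zero _) (X_sub_C_ne_zero _), Multiset.map_const', mul_comm]
  · obtain ⟨a, -, rfl⟩ := Multiset.mem_map.mp hf
    exact (monic_X_sub_C _).mul (monic_X_sub_C _)

theorem roots_reciprocalPairProd (S : Multiset F) :
    (reciprocalPairProd S).roots = S.map (·⁻¹) + S := by
  rw [reciprocalPairProd, roots_multiset_prod _ ?_]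
  · simp only [Multiset.bind_map, roots_mul (mul_ne_zero (X_sub_C_ne_zero _) (X_sub_C_ne_zero _)),
      roots_X_sub_C, Multiset.bind_add]
    exact congrArg₂ (· + ·) (S.bind_singleton _) ((S.bind_singleton id).trans S.map_id)
  · simp [X_sub_C_ne_zero]

theorem algebraMap_reciprocalPairProd_map {ι : Type*} (s : Finset ι) (u : ι → F) :
    algebraMap F[X] (RatFunc F) (reciprocalPairProd (s.val.map u))
      = ∏ i ∈ s, (RatFunc.X - RatFunc.C (u i)⁻¹) * (RatFunc.X - RatFunc.C (u i)) := by
  simp [reciprocalPairProd, Multiset.map_map]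

theorem C_mul_X_pow_mul_eq_of_ratFunc_identity {p q : F[X]} {c a d : F}
    (r s : ℕ) (hd : d ≠ 0) (hq : q ≠ 0)
    (h : 1 = RatFunc.C c * (-RatFunc.X) ^ ((r : ℤ) - s) * (RatFunc.C a / RatFunc.C d)
      * algebraMap F[X] (RatFunc F) p / algebraMap F[X] (RatFunc F) q) :
    C ((-1) ^ s * d) * (X ^ s * q) = C ((-1) ^ r * (c * a)) * (X ^ r * p) := by
  have hX : (-RatFunc.X : RatFunc F) ≠ 0 := neg_ne_zero.mpr RatFunc.X_ne_zero
  have hq' : algebraMap F[X] (RatFunc F) q ≠ 0 := by simpa using hq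
  have hd' : RatFunc.C d ≠ 0 := by simpa using hd
  rw [zpow_sub₀ hX, zpow_natCast, zpow_natCast] at h
  field_simp at h
  apply RatFunc.algebraMap_injective F
  simp only [map_mul, map_pow, map_neg, map_one, RatFunc.algebraMap_C, RatFunc.algebraMap_X]
  linear_combination h

end Polynomial

theorem stmt13_general (F : Type*) [Field F] (s r : ℕ)
    (u : Fin s → F) (v : Fin r → F)
    (hv0 : ∀ j, v j ≠ 0)
    (huv : ∀ ℓ j, u ℓ ≠ (v j)⁻¹)
    (A₀ : F)
    (hid : (1 : RatFunc F)
      = (RatFunc.C A₀) ^ 2 * (-RatFunc.X) ^ ((r : ℤ) - (s : ℤ))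
        * (RatFunc.C (∏ ℓ, u ℓ) / RatFunc.C (∏ j, v j))
        * (∏ ℓ : Fin s, (RatFunc.X - RatFunc.C (u ℓ)⁻¹) * (RatFunc.X - RatFunc.C (u ℓ)))
        / (∏ j : Fin r, (RatFunc.X - RatFunc.C (v j)⁻¹) * (RatFunc.X - RatFunc.C (v j)))) :
    r = s ∧ A₀ ^ 2 = 1 ∧
      Multiset.map u Finset.univ.val = Multiset.map v Finset.univ.val := by
  set U := Multiset.map u Finset.univ.val
  set V := Multiset.map v Finset.univ.val
  have hV : V.prod ≠ 0 := Multiset.prod_ne_zero (by simpa [V, eq_comm] using hv0)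
  rw [← map_pow, ← algebraMap_reciprocalPairProd_map, ← algebraMap_reciprocalPairProd_map,
    ← Finset.prod_map_val, ← Finset.prod_map_val] at hid
  obtain ⟨hcoef, hXP⟩ := ((monic_X_pow s).mul (monic_reciprocalPairProd V)).eq_of_C_mul_eq_C_mul
    ((monic_X_pow r).mul (monic_reciprocalPairProd U)) (by simpa using hV)
    (C_mul_X_pow_mul_eq_of_ratFunc_identity r s hV (monic_reciprocalPairProd V).ne_zero hid)
  have hrs : r = s := by
    have := congrArg natDegree hXP
    simp only [(monic_X_pow _).natDegree_mul (monic_reciprocalPairProd _), natDegree_X_pow,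
      natDegree_reciprocalPairProd, U, V, Multiset.card_map, Finset.card_val, Finset.card_univ,
      Fintype.card_fin] at this
    omega
  subst hrs
  have hroots : U.map (·⁻¹) + U = V.map (·⁻¹) + V := by
    rw [← roots_reciprocalPairProd, ← roots_reciprocalPairProd,
      mul_left_cancel₀ (pow_ne_zero _ X_ne_zero) hXP]
  have hUV : U = V := Multiset.eq_of_add_eq_add_of_disjoint hroots
    (by simpa [Multiset.disjoint_left, U, V, eq_comm] using huv) (by simp [U, V])
  refine ⟨rfl, ?_, hUV⟩
  rw [← hUV] at hcoef hV
  have hprod := mul_left_cancel₀ (pow_ne_zero r (neg_ne_zero.mpr one_ne_zero)) hcoef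
  exact mul_right_cancel₀ hV (by rw [one_mul, ← hprod])

/-- If 1 = A₀²·(−t)^{r−s}·(∏uₗ/∏vⱼ)·∏(t−uₗ⁻¹)(t−uₗ) / ∏(t−vⱼ⁻¹)(t−vⱼ) in F(t), with the
uₗ, vⱼ nonzero and uₗ ≠ vⱼ⁻¹, then r = s, A₀² = 1, and the multisets {uₗ} and {vⱼ}
coincide. -/
theorem stmt13 (F : Type*) [Field F] (s r : ℕ)
    (u : Fin s → F) (v : Fin r → F)
    (hu0 : ∀ ℓ, u ℓ ≠ 0) (hv0 : ∀ j, v j ≠ 0)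
    (huv : ∀ ℓ j, u ℓ ≠ (v j)⁻¹)
    (A₀ : F) (m : ℤ)
    (hid : (1 : RatFunc F)
      = (RatFunc.C A₀) ^ 2 * (-RatFunc.X) ^ ((r : ℤ) - (s : ℤ))
        * (RatFunc.C (∏ ℓ, u ℓ) / RatFunc.C (∏ j, v j))
        * (∏ ℓ : Fin s, (RatFunc.X - RatFunc.C (u ℓ)⁻¹) * (RatFunc.X - RatFunc.C (u ℓ)))
        / (∏ j : Fin r, (RatFunc.X - RatFunc.C (v j)⁻¹) * (RatFunc.X - RatFunc.C (v j)))) :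
    r = s ∧ A₀ ^ 2 = 1 ∧
      Multiset.map u Finset.univ.val = Multiset.map v Finset.univ.val :=
  stmt13_general F s r u v hv0 huv A₀ hid
end
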